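/- arXiv:2403.04474 — 2 statements merged into one kernel-verified Lean document; each statement's English description precedes it below -/
import Mathlib

section
/- Let r ≥ 4 be an integer and let K_1 and K_2 be (r-2)-uniform hypergraphs on disjoint vertex sets such that for each i ∈ {1,2} and every ℓ with 2 ≤ ℓ ≤ 7, any ℓ distinct edges of K_i span more than (r-4)ℓ+2 vertices. Let t ≥ 1, let K_1^1, …, K_1^t be distinct edges of K_1, let K_2^1, …, K_2^t be distinct edges of K_2, and let x_1, y_1, …, x_t, y_t be 2t distinct vertices lying outside the vertex sets of K_1 and K_2. Then the r-graph F with edge set {K_1^j ∪ {x_j,y_j} : j ∈ [t]} ∪ {K_2^j ∪ {x_j,y_j} : j ∈ [t]} is (2r-3,2)-free, (3r-4,3)-free and (4r-7,4)-free. -/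
/-!
Split a set `S` of edges of `F` into the indices `J₁` of its edges `K₁^j ∪ {x_j, y_j}` and the
indices `J₂` of its edges `K₂^j ∪ {x_j, y_j}`. Since `K₁`, `K₂` and the vertices `x_j, y_j` live on
pairwise disjoint vertex sets, `S` spans exactly
`|⋃_{J₁} K₁^j| + |⋃_{J₂} K₂^j| + 2 |J₁ ∪ J₂|` vertices. The girth conditions on `K₁` and `K₂`
bound the first two terms from below, and `|J₁ ∪ J₂| ≥ max |J₁| |J₂|`; a check of the few
splittings `|S| = |J₁| + |J₂| ≤ 4` finishes the proof.
-/

open Finset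

/-- `G` is an `r`-graph: a finite set of edges, each edge a finite set of exactly `r` vertices. -/
def IsRGraph {V : Type*} (r : ℕ) (G : Finset (Finset V)) : Prop :=
  ∀ e ∈ G, e.card = r

/-- `G` contains an `(s,k)`-configuration: `k` distinct edges spanning at most `s` vertices. -/
def HasConfig {V : Type*} [DecidableEq V] (s k : ℕ) (G : Finset (Finset V)) : Prop :=
  ∃ S ⊆ G, S.card = k ∧ (S.biUnion id).card ≤ s

/-- `G` is `(s,k)`-free. -/
def ConfigFree {V : Type*} [DecidableEq V] (s k : ℕ) (G : Finset (Finset V)) : Prop :=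
  ¬ HasConfig s k G

theorem configFree_iff {V : Type*} [DecidableEq V] {s k : ℕ} {G : Finset (Finset V)} :
    ConfigFree s k G ↔ ∀ S ⊆ G, S.card = k → s < (S.biUnion id).card := by
  simp [ConfigFree, HasConfig]

theorem Finset.exists_eq_image_union_image {α β : Type*} [DecidableEq β] {S : Finset β}
    {s : Finset α} {f g : α → β} (h : S ⊆ s.image f ∪ s.image g) :
    ∃ J₁ J₂ : Finset α, S = J₁.image f ∪ J₂.image g :=
  ⟨s.filter (f · ∈ S), s.filter (g · ∈ S), by grind⟩

/-- The lower bound `(r - 4) ℓ + min ℓ 2 + min ℓ 1` is `0`, `r - 2` and `(r - 4) ℓ + 3`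
for `ℓ = 0`, `ℓ = 1` and `2 ≤ ℓ` respectively. -/
theorem IsRGraph.card_biUnion_ge {ι V : Type*} [DecidableEq V] {r : ℕ} {K : Finset (Finset V)}
    (hr : 4 ≤ r) (hK : IsRGraph (r - 2) K)
    (hg : ∀ ℓ, 2 ≤ ℓ → ℓ ≤ 7 → ∀ S ⊆ K, S.card = ℓ → (r - 4) * ℓ + 2 < (S.biUnion id).card)
    {E : ι → Finset V} (hE : ∀ j, E j ∈ K) (hEinj : Function.Injective E)
    {J : Finset ι} (hJ : J.card ≤ 7) :
    (r - 4) * J.card + min J.card 2 + min J.card 1 ≤ (J.biUnion E).card := by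
  rw [← card_image_of_injective J hEinj,
    show J.biUnion E = (J.image E).biUnion id by rw [image_biUnion]; rfl]
  have hS : J.image E ⊆ K := image_subset_iff.2 fun j _ => hE j
  rw [← card_image_of_injective J hEinj] at hJ
  generalize J.image E = S at hS hJ ⊢
  obtain h | h | h := (by omega : S.card = 0 ∨ S.card = 1 ∨ 2 ≤ S.card)
  · simp [h]
  · obtain ⟨e, rfl⟩ := card_eq_one.1 h
    rw [card_singleton, singleton_biUnion, id, hK e (hS (mem_singleton_self e))]
    omega
  · have := hg _ h hJ S hS rfl
    omega

section Diamonds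

variable {ι V : Type*} [DecidableEq V] {E E₁ E₂ : ι → Finset V} {x y : ι → V}

theorem card_biUnion_pair (hxy : Function.Injective (Sum.elim x y)) (J : Finset ι) :
    (J.biUnion fun j => ({x j, y j} : Finset V)).card = 2 * J.card := by
  have : (J.biUnion fun j => ({x j, y j} : Finset V)) = (J.disjSum J).image (Sum.elim x y) := by
    ext v
    simp only [mem_biUnion, mem_insert, mem_singleton, mem_image, Sum.exists, inl_mem_disjSum,
      inr_mem_disjSum, Sum.elim_inl, Sum.elim_inr]
    grind
  rw [this, card_image_of_injective _ hxy, card_disjSum]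
  ring

theorem injective_union_pair (hx : ∀ i j, x i ∉ E j) (hxy : Function.Injective (Sum.elim x y)) :
    Function.Injective fun j => E j ∪ {x j, y j} := by
  intro i j h
  have : x i ∈ E j ∪ {x j, y j} := by
    simp only at h
    rw [← h]
    simp
  simp only [mem_union, hx, mem_insert, mem_singleton, false_or] at this
  rcases this with h | h
  · simpa using @hxy (.inl i) (.inl j) h
  · simpa using @hxy (.inl i) (.inr j) h

variable {N₁ N₂ : Finset V}

theorem union_pair_ne {i j : ι} (hE₁ : (E₁ i).Nonempty) (hE₁N : E₁ i ⊆ N₁) (hE₂N : E₂ j ⊆ N₂)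
    (hN : Disjoint N₁ N₂) (hx : x j ∉ N₁) (hy : y j ∉ N₁) :
    E₁ i ∪ {x i, y i} ≠ E₂ j ∪ {x j, y j} := by
  intro h
  obtain ⟨v, hv⟩ := hE₁
  have hv₁ : v ∈ N₁ := hE₁N hv
  have : v ∈ E₂ j ∪ {x j, y j} := h ▸ mem_union_left _ hv
  simp only [mem_union, mem_insert, mem_singleton] at this
  rcases this with h | rfl | rfl
  · exact disjoint_left.1 hN hv₁ (hE₂N h)
  · exact hx hv₁
  · exact hy hv₁

theorem biUnion_image_union_pair [DecidableEq ι] (J₁ J₂ : Finset ι) :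
    ((J₁.image fun j => E₁ j ∪ {x j, y j}) ∪ J₂.image fun j => E₂ j ∪ {x j, y j}).biUnion id =
      (J₁.biUnion E₁ ∪ J₂.biUnion E₂) ∪ (J₁ ∪ J₂).biUnion fun j => {x j, y j} := by
  ext v
  simp only [mem_biUnion, mem_union, mem_image, id]
  grind

theorem exists_diamond_split [DecidableEq ι] (hN : Disjoint N₁ N₂)
    (hE₁N : ∀ j, E₁ j ⊆ N₁) (hE₂N : ∀ j, E₂ j ⊆ N₂) (hE₁ : ∀ j, (E₁ j).Nonempty)
    (hx : ∀ j, x j ∉ N₁ ∪ N₂) (hy : ∀ j, y j ∉ N₁ ∪ N₂) (hxy : Function.Injective (Sum.elim x y))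
    {s : Finset ι} {S : Finset (Finset V)}
    (hS : S ⊆ (s.image fun j => E₁ j ∪ {x j, y j}) ∪ s.image fun j => E₂ j ∪ {x j, y j}) :
    ∃ J₁ J₂ : Finset ι, S.card = J₁.card + J₂.card ∧
      (S.biUnion id).card = (J₁.biUnion E₁).card + (J₂.biUnion E₂).card + 2 * (J₁ ∪ J₂).card := by
  obtain ⟨J₁, J₂, rfl⟩ := exists_eq_image_union_image hS
  refine ⟨J₁, J₂, ?_, ?_⟩
  · rw [card_union_of_disjoint, card_image_of_injective, card_image_of_injective]
    · exact injective_union_pair (fun i j h => hx i (mem_union_right _ (hE₂N j h))) hxy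
    · exact injective_union_pair (fun i j h => hx i (mem_union_left _ (hE₁N j h))) hxy
    · simp only [disjoint_left, mem_image]
      rintro _ ⟨i, -, rfl⟩ ⟨j, -, h⟩
      exact union_pair_ne (hE₁ i) (hE₁N i) (hE₂N j) hN (fun h => hx j (mem_union_left _ h))
        (fun h => hy j (mem_union_left _ h)) h.symm
  · have hEN : J₁.biUnion E₁ ∪ J₂.biUnion E₂ ⊆ N₁ ∪ N₂ :=
      union_subset_union (biUnion_subset.2 fun j _ => hE₁N j) (biUnion_subset.2 fun j _ => hE₂N j)
    rw [biUnion_image_union_pair, card_union_of_disjoint, card_union_of_disjoint,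
      card_biUnion_pair hxy]
    · exact disjoint_of_subset_left (biUnion_subset.2 fun j _ => hE₁N j)
        (disjoint_of_subset_right (biUnion_subset.2 fun j _ => hE₂N j) hN)
    · refine disjoint_of_subset_left hEN (disjoint_right.2 fun v hv => ?_)
      simp only [mem_biUnion, mem_insert, mem_singleton] at hv
      obtain ⟨j, -, rfl | rfl⟩ := hv
      exacts [hx j, hy j]

end Diamonds

theorem diamond_span_bounds {r a b m u₁ u₂ : ℕ} (hr : 4 ≤ r) (hab : a + b ≤ 4) (ha : a ≤ m)
    (hb : b ≤ m) (h₁ : (r - 4) * a + min a 2 + min a 1 ≤ u₁)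
    (h₂ : (r - 4) * b + min b 2 + min b 1 ≤ u₂) :
    (a + b = 2 → 2 * r - 3 < u₁ + u₂ + 2 * m) ∧ (a + b = 3 → 3 * r - 4 < u₁ + u₂ + 2 * m) ∧
      (a + b = 4 → 4 * r - 7 < u₁ + u₂ + 2 * m) := by
  have : a ≤ 4 := by omega
  have : b ≤ 4 := by omega
  interval_cases a <;> interval_cases b <;> omega

theorem diamonds_small_free_general {V : Type*} [DecidableEq V] (r : ℕ) (hr : 4 ≤ r)
    (K₁ K₂ : Finset (Finset V))
    (hK₁ : IsRGraph (r - 2) K₁) (hK₂ : IsRGraph (r - 2) K₂)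
    (hdisj : Disjoint (K₁.biUnion id) (K₂.biUnion id))
    (hg₁ : ∀ ℓ, 2 ≤ ℓ → ℓ ≤ 7 → ∀ S ⊆ K₁, S.card = ℓ →
      (r - 4) * ℓ + 2 < (S.biUnion id).card)
    (hg₂ : ∀ ℓ, 2 ≤ ℓ → ℓ ≤ 7 → ∀ S ⊆ K₂, S.card = ℓ →
      (r - 4) * ℓ + 2 < (S.biUnion id).card)
    (t : ℕ)
    (E₁ E₂ : Fin t → Finset V)
    (hE₁ : ∀ j, E₁ j ∈ K₁) (hE₁inj : Function.Injective E₁)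
    (hE₂ : ∀ j, E₂ j ∈ K₂) (hE₂inj : Function.Injective E₂)
    (x y : Fin t → V)
    (hxyinj : Function.Injective (Sum.elim x y))
    (hxout : ∀ j, x j ∉ K₁.biUnion id ∪ K₂.biUnion id)
    (hyout : ∀ j, y j ∉ K₁.biUnion id ∪ K₂.biUnion id)
    (F : Finset (Finset V))
    (hF : F = (Finset.univ.image fun j : Fin t => E₁ j ∪ {x j, y j}) ∪
              (Finset.univ.image fun j : Fin t => E₂ j ∪ {x j, y j})) :
    ConfigFree (2 * r - 3) 2 F ∧ ConfigFree (3 * r - 4) 3 F ∧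
      ConfigFree (4 * r - 7) 4 F := by
  have hbound : ∀ S ⊆ F, S.card ≤ 4 →
      (S.card = 2 → 2 * r - 3 < (S.biUnion id).card) ∧
      (S.card = 3 → 3 * r - 4 < (S.biUnion id).card) ∧
      (S.card = 4 → 4 * r - 7 < (S.biUnion id).card) := by
    have hE₁ne : ∀ j, (E₁ j).Nonempty := fun j => card_pos.1 (by rw [hK₁ _ (hE₁ j)]; omega)
    intro S hS hS4
    obtain ⟨J₁, J₂, hcard, hspan⟩ := exists_diamond_split hdisj
      (fun j => subset_biUnion_of_mem id (hE₁ j)) (fun j => subset_biUnion_of_mem id (hE₂ j))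
      hE₁ne hxout hyout hxyinj (hF ▸ hS)
    rw [hcard, hspan]
    exact diamond_span_bounds hr (hcard ▸ hS4) (card_le_card subset_union_left)
      (card_le_card subset_union_right) (hK₁.card_biUnion_ge hr hg₁ hE₁ hE₁inj (by omega))
      (hK₂.card_biUnion_ge hr hg₂ hE₂ hE₂inj (by omega))
  simp only [configFree_iff]
  exact ⟨fun S hS hk => (hbound S hS (by omega)).1 hk,
    fun S hS hk => (hbound S hS (by omega)).2.1 hk, fun S hS hk => (hbound S hS (by omega)).2.2 hk⟩

/-- Small configurations in the diamond construction: the union of the `t` diamonds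
`{K_1^j ∪ {x_j,y_j}, K_2^j ∪ {x_j,y_j}}` is `(2r-3,2)`-, `(3r-4,3)`- and `(4r-7,4)`-free. -/
theorem diamonds_small_free {V : Type*} [DecidableEq V] (r : ℕ) (hr : 4 ≤ r)
    (K₁ K₂ : Finset (Finset V))
    (hK₁ : IsRGraph (r - 2) K₁) (hK₂ : IsRGraph (r - 2) K₂)
    (hdisj : Disjoint (K₁.biUnion id) (K₂.biUnion id))
    (hg₁ : ∀ ℓ, 2 ≤ ℓ → ℓ ≤ 7 → ∀ S ⊆ K₁, S.card = ℓ →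
      (r - 4) * ℓ + 2 < (S.biUnion id).card)
    (hg₂ : ∀ ℓ, 2 ≤ ℓ → ℓ ≤ 7 → ∀ S ⊆ K₂, S.card = ℓ →
      (r - 4) * ℓ + 2 < (S.biUnion id).card)
    (t : ℕ) (ht : 1 ≤ t)
    (E₁ E₂ : Fin t → Finset V)
    (hE₁ : ∀ j, E₁ j ∈ K₁) (hE₁inj : Function.Injective E₁)
    (hE₂ : ∀ j, E₂ j ∈ K₂) (hE₂inj : Function.Injective E₂)
    (x y : Fin t → V)
    (hxyinj : Function.Injective (Sum.elim x y))
    (hxout : ∀ j, x j ∉ K₁.biUnion id ∪ K₂.biUnion id)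
    (hyout : ∀ j, y j ∉ K₁.biUnion id ∪ K₂.biUnion id)
    (F : Finset (Finset V))
    (hF : F = (Finset.univ.image fun j : Fin t => E₁ j ∪ {x j, y j}) ∪
              (Finset.univ.image fun j : Fin t => E₂ j ∪ {x j, y j})) :
    ConfigFree (2 * r - 3) 2 F ∧ ConfigFree (3 * r - 4) 3 F ∧
      ConfigFree (4 * r - 7) 4 F :=
  diamonds_small_free_general r hr K₁ K₂ hK₁ hK₂ hdisj hg₁ hg₂ t E₁ E₂ hE₁ hE₁inj hE₂ hE₂inj x y
    hxyinj hxout hyout F hF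
end

section
/- Let r ≥ 4 be an integer and let K_1 and K_2 be (r-2)-uniform hypergraphs on disjoint vertex sets such that for each i ∈ {1,2} and every ℓ with 2 ≤ ℓ ≤ 7, any ℓ distinct edges of K_i span more than (r-4)ℓ+2 vertices. Let t ≥ 1, let K_1^1, …, K_1^t be distinct edges of K_1, let K_2^1, …, K_2^t be distinct edges of K_2, and let x_1, y_1, …, x_t, y_t be 2t distinct vertices lying outside the vertex sets of K_1 and K_2. Assume additionally that there do not exist distinct indices j, j' ∈ [t], an index i ∈ {1,2} and an edge K of K_i with K ∉ {K_i^j, K_i^{j'}} such that |K_{3-i}^j ∪ K_{3-i}^{j'}| = 2(r-2)-1 and |K_i^j ∪ K_i^{j'} ∪ K| ≤ 3(r-2)-3. Then the r-graph F with edge set {K_1^j ∪ {x_j,y_j} : j ∈ [t]} ∪ {K_2^j ∪ {x_j,y_j} : j ∈ [t]} is (5r-8,5)-free and (6r-11,6)-free. -/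
open Finset

private lemma pair_big' {V : Type*} [DecidableEq V] {r : ℕ} {a b c a' b' : Finset V}
    (ha' : a'.card = r - 2) (hb' : b'.card = r - 2)
    (hcP : ¬ ((a' ∪ b').card = 2 * (r - 2) - 1 ∧ (a ∪ b ∪ c).card ≤ 3 * (r - 2) - 3))
    (hlb : 2 * (r - 2) - 1 ≤ (a' ∪ b').card)
    (htrip : (a ∪ b ∪ c).card ≤ 3 * (r - 2) - 3) :
    (a' ∪ b').card = 2 * (r - 2) := by
  have hub := Finset.card_union_le a' b'
  rw [ha', hb'] at hub
  by_contra h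
  exact hcP ⟨by omega, htrip⟩

private lemma disj_of_card' {V : Type*} [DecidableEq V] {n : ℕ} {a b : Finset V}
    (ha : a.card = n) (hb : b.card = n) (h : (a ∪ b).card = 2 * n) : Disjoint a b := by
  have h2 := Finset.card_union_add_card_inter a b
  rw [Finset.disjoint_iff_inter_eq_empty, ← Finset.card_eq_zero]
  omega

private lemma card_union3' {V : Type*} [DecidableEq V] {a b c : Finset V}
    (dab : Disjoint a b) (dac : Disjoint a c) (dbc : Disjoint b c) :
    (a ∪ b ∪ c).card = a.card + b.card + c.card := by
  rw [Finset.card_union_of_disjoint (Finset.disjoint_union_left.mpr ⟨dac, dbc⟩),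
    Finset.card_union_of_disjoint dab]

private lemma span2' {V : Type*} [DecidableEq V] {r : ℕ} {K : Finset (Finset V)}
    (hg : ∀ ℓ, 2 ≤ ℓ → ℓ ≤ 7 → ∀ S ⊆ K, S.card = ℓ → (r - 4) * ℓ + 2 < (S.biUnion id).card)
    {a b : Finset V} (ha : a ∈ K) (hb : b ∈ K) (hab : a ≠ b) :
    (r - 4) * 2 + 2 < (a ∪ b).card := by
  have h := hg 2 le_rfl (by norm_num) {a, b}
    (by intro e he; simp at he; rcases he with rfl | rfl <;> assumption)
    (Finset.card_pair hab)
  have heq : ({a, b} : Finset (Finset V)).biUnion id = a ∪ b := by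
    ext v; simp
  rwa [heq] at h

private lemma decomp' {V : Type*} [DecidableEq V] {t : ℕ}
    (K₁ K₂ : Finset (Finset V))
    (hdisj : Disjoint (K₁.biUnion id) (K₂.biUnion id))
    (E₁ E₂ : Fin t → Finset V)
    (hE₁ : ∀ j, E₁ j ∈ K₁) (hE₂ : ∀ j, E₂ j ∈ K₂)
    (hE₁ne : ∀ j, (E₁ j).Nonempty)
    (x y : Fin t → V)
    (hxx : Function.Injective x) (hyy : Function.Injective y)
    (hxy : ∀ a b, x a ≠ y b)
    (hx1 : ∀ j, x j ∉ K₁.biUnion id) (hx2 : ∀ j, x j ∉ K₂.biUnion id)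
    (hy1 : ∀ j, y j ∉ K₁.biUnion id) (hy2 : ∀ j, y j ∉ K₂.biUnion id)
    (S : Finset (Finset V))
    (hS : S ⊆ (Finset.univ.image fun j : Fin t => E₁ j ∪ {x j, y j}) ∪
              (Finset.univ.image fun j : Fin t => E₂ j ∪ {x j, y j})) :
    ∃ J₁ J₂ : Finset (Fin t),
      S.card = J₁.card + J₂.card ∧
      (J₁.biUnion E₁).card + (J₂.biUnion E₂).card + 2 * (J₁ ∪ J₂).card
        ≤ (S.biUnion id).card := by
  classical
  set A : Fin t → Finset V := fun j => E₁ j ∪ {x j, y j} with hA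
  set B : Fin t → Finset V := fun j => E₂ j ∪ {x j, y j} with hB
  have hmE₁ : ∀ j v, v ∈ E₁ j → v ∈ K₁.biUnion id := fun j v hv =>
    Finset.mem_biUnion.mpr ⟨E₁ j, hE₁ j, hv⟩
  have hmE₂ : ∀ j v, v ∈ E₂ j → v ∈ K₂.biUnion id := fun j v hv =>
    Finset.mem_biUnion.mpr ⟨E₂ j, hE₂ j, hv⟩
  have hxA : ∀ j, x j ∈ A j := fun j => by simp [hA]
  have hyA : ∀ j, y j ∈ A j := fun j => by simp [hA]
  have hxB : ∀ j, x j ∈ B j := fun j => by simp [hB]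
  have hyB : ∀ j, y j ∈ B j := fun j => by simp [hB]
  have hAinj : Function.Injective A := by
    intro a b h
    have hxa : x a ∈ A b := h ▸ hxA a
    simp only [hA, Finset.mem_union, Finset.mem_insert, Finset.mem_singleton] at hxa
    rcases hxa with h' | h' | h'
    · exact absurd (hmE₁ b _ h') (hx1 a)
    · exact hxx h'
    · exact absurd h' (hxy a b)
  have hBinj : Function.Injective B := by
    intro a b h
    have hxa : x a ∈ B b := h ▸ hxB a
    simp only [hB, Finset.mem_union, Finset.mem_insert, Finset.mem_singleton] at hxa
    rcases hxa with h' | h' | h'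
    · exact absurd (hmE₂ b _ h') (hx2 a)
    · exact hxx h'
    · exact absurd h' (hxy a b)
  have hAB : ∀ a b, A a ≠ B b := by
    intro a b h
    obtain ⟨v, hv⟩ := hE₁ne a
    have hv1 : v ∈ K₁.biUnion id := hmE₁ a v hv
    have hvB : v ∈ B b := h ▸ Finset.mem_union_left _ hv
    simp only [hB, Finset.mem_union, Finset.mem_insert, Finset.mem_singleton] at hvB
    rcases hvB with h' | h' | h'
    · exact (Finset.disjoint_left.mp hdisj hv1) (hmE₂ b v h')
    · exact hx1 b (h' ▸ hv1)
    · exact hy1 b (h' ▸ hv1)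
  refine ⟨Finset.univ.filter (fun j => A j ∈ S), Finset.univ.filter (fun j => B j ∈ S), ?_, ?_⟩
  · have hSeq : S = (Finset.univ.filter (fun j => A j ∈ S)).image A ∪
        (Finset.univ.filter (fun j => B j ∈ S)).image B := by
      ext e
      constructor
      · intro he
        rcases Finset.mem_union.mp (hS he) with h | h
        · obtain ⟨j, -, rfl⟩ := Finset.mem_image.mp h
          exact Finset.mem_union_left _ (Finset.mem_image.mpr
            ⟨j, Finset.mem_filter.mpr ⟨Finset.mem_univ j, he⟩, rfl⟩)
        · obtain ⟨j, -, rfl⟩ := Finset.mem_image.mp h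
          exact Finset.mem_union_right _ (Finset.mem_image.mpr
            ⟨j, Finset.mem_filter.mpr ⟨Finset.mem_univ j, he⟩, rfl⟩)
      · intro he
        rcases Finset.mem_union.mp he with h | h
        · obtain ⟨j, hj, rfl⟩ := Finset.mem_image.mp h
          exact (Finset.mem_filter.mp hj).2
        · obtain ⟨j, hj, rfl⟩ := Finset.mem_image.mp h
          exact (Finset.mem_filter.mp hj).2
    have hdisjim : Disjoint ((Finset.univ.filter (fun j => A j ∈ S)).image A)
        ((Finset.univ.filter (fun j => B j ∈ S)).image B) := by
      rw [Finset.disjoint_left]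
      intro e hea heb
      obtain ⟨a, -, rfl⟩ := Finset.mem_image.mp hea
      obtain ⟨b, -, hb⟩ := Finset.mem_image.mp heb
      exact hAB a b hb.symm
    conv_lhs => rw [hSeq]
    rw [Finset.card_union_of_disjoint hdisjim,
      Finset.card_image_of_injective _ hAinj, Finset.card_image_of_injective _ hBinj]
  · set J₁ := Finset.univ.filter (fun j => A j ∈ S) with hJ₁
    set J₂ := Finset.univ.filter (fun j => B j ∈ S) with hJ₂
    set P₁ := (J₁ ∪ J₂).image x with hP₁
    set P₂ := (J₁ ∪ J₂).image y with hP₂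
    have hsub : J₁.biUnion E₁ ∪ (J₂.biUnion E₂ ∪ (P₁ ∪ P₂)) ⊆ S.biUnion id := by
      intro v hv
      rw [Finset.mem_biUnion]
      rcases Finset.mem_union.mp hv with h | h
      · obtain ⟨j, hj, hvj⟩ := Finset.mem_biUnion.mp h
        exact ⟨A j, (Finset.mem_filter.mp hj).2, Finset.mem_union_left _ hvj⟩
      rcases Finset.mem_union.mp h with h | h
      · obtain ⟨j, hj, hvj⟩ := Finset.mem_biUnion.mp h
        exact ⟨B j, (Finset.mem_filter.mp hj).2, Finset.mem_union_left _ hvj⟩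
      rcases Finset.mem_union.mp h with h | h
      · obtain ⟨j, hj, rfl⟩ := Finset.mem_image.mp h
        rcases Finset.mem_union.mp hj with h' | h'
        · exact ⟨A j, (Finset.mem_filter.mp h').2, hxA j⟩
        · exact ⟨B j, (Finset.mem_filter.mp h').2, hxB j⟩
      · obtain ⟨j, hj, rfl⟩ := Finset.mem_image.mp h
        rcases Finset.mem_union.mp hj with h' | h'
        · exact ⟨A j, (Finset.mem_filter.mp h').2, hyA j⟩
        · exact ⟨B j, (Finset.mem_filter.mp h').2, hyB j⟩
    have hcardsub := Finset.card_le_card hsub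
    have hmemJ₁ : ∀ v ∈ J₁.biUnion E₁, v ∈ K₁.biUnion id := by
      intro v hv
      obtain ⟨j, -, h⟩ := Finset.mem_biUnion.mp hv
      exact hmE₁ j v h
    have hmemJ₂ : ∀ v ∈ J₂.biUnion E₂, v ∈ K₂.biUnion id := by
      intro v hv
      obtain ⟨j, -, h⟩ := Finset.mem_biUnion.mp hv
      exact hmE₂ j v h
    have hd₃ : Disjoint P₁ P₂ := by
      rw [Finset.disjoint_left]
      intro v h h'
      obtain ⟨a, -, rfl⟩ := Finset.mem_image.mp h
      obtain ⟨b, -, hb⟩ := Finset.mem_image.mp h'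
      exact hxy a b hb.symm
    have hd₂ : Disjoint (J₂.biUnion E₂) (P₁ ∪ P₂) := by
      rw [Finset.disjoint_left]
      intro v hv hv'
      have hvK := hmemJ₂ v hv
      rcases Finset.mem_union.mp hv' with h | h
      · obtain ⟨j, -, rfl⟩ := Finset.mem_image.mp h
        exact hx2 j hvK
      · obtain ⟨j, -, rfl⟩ := Finset.mem_image.mp h
        exact hy2 j hvK
    have hd₁ : Disjoint (J₁.biUnion E₁) (J₂.biUnion E₂ ∪ (P₁ ∪ P₂)) := by
      rw [Finset.disjoint_left]
      intro v hv hv'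
      have hvK := hmemJ₁ v hv
      rcases Finset.mem_union.mp hv' with h | h
      · exact (Finset.disjoint_left.mp hdisj hvK) (hmemJ₂ v h)
      rcases Finset.mem_union.mp h with h | h
      · obtain ⟨j, -, rfl⟩ := Finset.mem_image.mp h
        exact hx1 j hvK
      · obtain ⟨j, -, rfl⟩ := Finset.mem_image.mp h
        exact hy1 j hvK
    have hP₁c : P₁.card = (J₁ ∪ J₂).card := Finset.card_image_of_injective _ hxx
    have hP₂c : P₂.card = (J₁ ∪ J₂).card := Finset.card_image_of_injective _ hyy
    calc (J₁.biUnion E₁).card + (J₂.biUnion E₂).card + 2 * (J₁ ∪ J₂).card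
        = (J₁.biUnion E₁ ∪ (J₂.biUnion E₂ ∪ (P₁ ∪ P₂))).card := by
          rw [Finset.card_union_of_disjoint hd₁, Finset.card_union_of_disjoint hd₂,
            Finset.card_union_of_disjoint hd₃, hP₁c, hP₂c]
          ring
      _ ≤ (S.biUnion id).card := hcardsub

set_option maxHeartbeats 1000000 in
/-- Larger configurations in the diamond construction: if additionally no conflict from
`𝒞_{3,3,2,1}` occurs (no matching of a defect-`1` pair on one side into a defect-`3`
triple on the other), then the union of the `t` diamonds is `(5r-8,5)`- and
`(6r-11,6)`-free. -/
theorem diamonds_large_free {V : Type*} [DecidableEq V] (r : ℕ) (hr : 4 ≤ r)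
    (K₁ K₂ : Finset (Finset V))
    (hK₁ : IsRGraph (r - 2) K₁) (hK₂ : IsRGraph (r - 2) K₂)
    (hdisj : Disjoint (K₁.biUnion id) (K₂.biUnion id))
    (hg₁ : ∀ ℓ, 2 ≤ ℓ → ℓ ≤ 7 → ∀ S ⊆ K₁, S.card = ℓ →
      (r - 4) * ℓ + 2 < (S.biUnion id).card)
    (hg₂ : ∀ ℓ, 2 ≤ ℓ → ℓ ≤ 7 → ∀ S ⊆ K₂, S.card = ℓ →
      (r - 4) * ℓ + 2 < (S.biUnion id).card)
    (t : ℕ) (ht : 1 ≤ t)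
    (E₁ E₂ : Fin t → Finset V)
    (hE₁ : ∀ j, E₁ j ∈ K₁) (hE₁inj : Function.Injective E₁)
    (hE₂ : ∀ j, E₂ j ∈ K₂) (hE₂inj : Function.Injective E₂)
    (x y : Fin t → V)
    (hxyinj : Function.Injective (Sum.elim x y))
    (hxout : ∀ j, x j ∉ K₁.biUnion id ∪ K₂.biUnion id)
    (hyout : ∀ j, y j ∉ K₁.biUnion id ∪ K₂.biUnion id)
    (hconf : ¬ ∃ j j' : Fin t, j ≠ j' ∧
      ((∃ K ∈ K₁, K ≠ E₁ j ∧ K ≠ E₁ j' ∧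
          (E₂ j ∪ E₂ j').card = 2 * (r - 2) - 1 ∧
          (E₁ j ∪ E₁ j' ∪ K).card ≤ 3 * (r - 2) - 3) ∨
       (∃ K ∈ K₂, K ≠ E₂ j ∧ K ≠ E₂ j' ∧
          (E₁ j ∪ E₁ j').card = 2 * (r - 2) - 1 ∧
          (E₂ j ∪ E₂ j' ∪ K).card ≤ 3 * (r - 2) - 3)))
    (F : Finset (Finset V))
    (hF : F = (Finset.univ.image fun j : Fin t => E₁ j ∪ {x j, y j}) ∪
              (Finset.univ.image fun j : Fin t => E₂ j ∪ {x j, y j})) :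
    ConfigFree (5 * r - 8) 5 F ∧ ConfigFree (6 * r - 11) 6 F := by
  subst hF
  have hx1 : ∀ j, x j ∉ K₁.biUnion id := fun j hj => hxout j (Finset.mem_union_left _ hj)
  have hx2 : ∀ j, x j ∉ K₂.biUnion id := fun j hj => hxout j (Finset.mem_union_right _ hj)
  have hy1 : ∀ j, y j ∉ K₁.biUnion id := fun j hj => hyout j (Finset.mem_union_left _ hj)
  have hy2 : ∀ j, y j ∉ K₂.biUnion id := fun j hj => hyout j (Finset.mem_union_right _ hj)
  have hxx : Function.Injective x := fun a b h => by
    have h2 := hxyinj (a₁ := Sum.inl a) (a₂ := Sum.inl b) h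
    simpa using h2
  have hyy : Function.Injective y := fun a b h => by
    have h2 := hxyinj (a₁ := Sum.inr a) (a₂ := Sum.inr b) h
    simpa using h2
  have hxy : ∀ a b, x a ≠ y b := fun a b h => by
    have h2 := hxyinj (a₁ := Sum.inl a) (a₂ := Sum.inr b) h
    simp at h2
  have hE₁ne : ∀ j, (E₁ j).Nonempty := fun j =>
    Finset.card_pos.mp (by rw [hK₁ _ (hE₁ j)]; omega)
  have span1₁ : ∀ J : Finset (Fin t), J.card = 1 → (J.biUnion E₁).card = r - 2 := by
    intro J hJ
    obtain ⟨j, rfl⟩ := Finset.card_eq_one.mp hJ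
    rw [Finset.singleton_biUnion]
    exact hK₁ _ (hE₁ j)
  have span1₂ : ∀ J : Finset (Fin t), J.card = 1 → (J.biUnion E₂).card = r - 2 := by
    intro J hJ
    obtain ⟨j, rfl⟩ := Finset.card_eq_one.mp hJ
    rw [Finset.singleton_biUnion]
    exact hK₂ _ (hE₂ j)
  have spanm₁ : ∀ J : Finset (Fin t), 2 ≤ J.card → J.card ≤ 7 →
      (r - 4) * J.card + 2 < (J.biUnion E₁).card := by
    intro J h2 h7
    have himg : J.image E₁ ⊆ K₁ := by
      intro e he; obtain ⟨j, -, rfl⟩ := Finset.mem_image.mp he; exact hE₁ j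
    have hcard : (J.image E₁).card = J.card := Finset.card_image_of_injective _ hE₁inj
    have h := hg₁ J.card (by omega) h7 _ himg hcard
    have heq : (J.image E₁).biUnion id = J.biUnion E₁ := by ext v; simp
    rwa [heq] at h
  have spanm₂ : ∀ J : Finset (Fin t), 2 ≤ J.card → J.card ≤ 7 →
      (r - 4) * J.card + 2 < (J.biUnion E₂).card := by
    intro J h2 h7
    have himg : J.image E₂ ⊆ K₂ := by
      intro e he; obtain ⟨j, -, rfl⟩ := Finset.mem_image.mp he; exact hE₂ j
    have hcard : (J.image E₂).card = J.card := Finset.card_image_of_injective _ hE₂inj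
    have h := hg₂ J.card (by omega) h7 _ himg hcard
    have heq : (J.image E₂).biUnion id = J.biUnion E₂ := by ext v; simp
    rwa [heq] at h
  have hcA : ∀ p p', p ≠ p' → ∀ K ∈ K₁, K ≠ E₁ p → K ≠ E₁ p' →
      ¬ ((E₂ p ∪ E₂ p').card = 2 * (r - 2) - 1 ∧
        (E₁ p ∪ E₁ p' ∪ K).card ≤ 3 * (r - 2) - 3) :=
    fun p p' hne K hK h1 h2 h3 => hconf ⟨p, p', hne, Or.inl ⟨K, hK, h1, h2, h3.1, h3.2⟩⟩
  have hcB : ∀ p p', p ≠ p' → ∀ K ∈ K₂, K ≠ E₂ p → K ≠ E₂ p' →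
      ¬ ((E₁ p ∪ E₁ p').card = 2 * (r - 2) - 1 ∧
        (E₂ p ∪ E₂ p' ∪ K).card ≤ 3 * (r - 2) - 3) :=
    fun p p' hne K hK h1 h2 h3 => hconf ⟨p, p', hne, Or.inr ⟨K, hK, h1, h2, h3.1, h3.2⟩⟩
  have plb₁ : ∀ p p', p ≠ p' → 2 * (r - 2) - 1 ≤ (E₁ p ∪ E₁ p').card := by
    intro p p' hne
    have := span2' hg₁ (hE₁ p) (hE₁ p') (fun he => hne (hE₁inj he))
    omega
  have plb₂ : ∀ p p', p ≠ p' → 2 * (r - 2) - 1 ≤ (E₂ p ∪ E₂ p').card := by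
    intro p p' hne
    have := span2' hg₂ (hE₂ p) (hE₂ p') (fun he => hne (hE₂inj he))
    omega
  constructor
  · -- (5r-8, 5)-free
    intro hcfg
    obtain ⟨S, hSsub, hScard, hSspan⟩ := hcfg
    obtain ⟨J₁, J₂, hJcard, hbound⟩ := decomp' K₁ K₂ hdisj E₁ E₂ hE₁ hE₂ hE₁ne
      x y hxx hyy hxy hx1 hx2 hy1 hy2 S hSsub
    have hle₁ : J₁.card ≤ (J₁ ∪ J₂).card := Finset.card_le_card Finset.subset_union_left
    have hle₂ : J₂.card ≤ (J₁ ∪ J₂).card := Finset.card_le_card Finset.subset_union_right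
    have hcases : J₁.card = 0 ∨ J₁.card = 1 ∨ J₁.card = 2 ∨ J₁.card = 3 ∨
        J₁.card = 4 ∨ J₁.card = 5 := by omega
    rcases hcases with h | h | h | h | h | h
    · have h2 : J₂.card = 5 := by omega
      have t₂ := spanm₂ J₂ (by omega) (by omega)
      rw [h2] at t₂; omega
    · have h2 : J₂.card = 4 := by omega
      have t₁ := span1₁ J₁ h
      have t₂ := spanm₂ J₂ (by omega) (by omega)
      rw [h2] at t₂; omega
    · -- (2,3): pair on side 1, triple on side 2
      have h2 : J₂.card = 3 := by omega
      have t₁ := spanm₁ J₁ (by omega) (by omega)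
      have t₂ := spanm₂ J₂ (by omega) (by omega)
      rw [h] at t₁; rw [h2] at t₂
      by_cases hJ : 4 ≤ (J₁ ∪ J₂).card
      · omega
      · have hJ₂J : J₂ = J₁ ∪ J₂ :=
          Finset.eq_of_subset_of_card_le Finset.subset_union_right (by omega)
        have hsub12 : J₁ ⊆ J₂ := by rw [hJ₂J]; exact Finset.subset_union_left
        obtain ⟨j, j', hne, hJ₁e⟩ := Finset.card_eq_two.mp h
        have hsd : (J₂ \ J₁).card = 1 := by rw [Finset.card_sdiff_of_subset hsub12]; omega
        obtain ⟨j'', hj''⟩ := Finset.card_eq_one.mp hsd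
        have hj''m : j'' ∈ J₂ \ J₁ := by rw [hj'']; exact Finset.mem_singleton_self j''
        rw [Finset.mem_sdiff, hJ₁e] at hj''m
        have hj''j : j'' ≠ j := fun hh => hj''m.2 (by simp [hh])
        have hj''j' : j'' ≠ j' := fun hh => hj''m.2 (by simp [hh])
        have hJ₂e : J₂ = {j, j'} ∪ {j''} := by
          rw [← Finset.union_sdiff_of_subset hsub12, hj'', hJ₁e]
        have hbu₂ : J₂.biUnion E₂ = E₂ j ∪ E₂ j' ∪ E₂ j'' := by
          rw [hJ₂e]
          ext v
          simp
          try tauto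
        have hbu₁ : J₁.biUnion E₁ = E₁ j ∪ E₁ j' := by
          rw [hJ₁e]
          simp [Finset.biUnion_insert]
        rw [hbu₁, hbu₂] at hbound
        rw [hbu₂] at t₂
        rw [hbu₁] at t₁
        by_cases htrip : (E₂ j ∪ E₂ j' ∪ E₂ j'').card ≤ 3 * (r - 2) - 3
        · have hpair := pair_big' (hK₁ _ (hE₁ j)) (hK₁ _ (hE₁ j'))
            (hcB j j' hne (E₂ j'') (hE₂ j'')
              (fun he => hj''j (hE₂inj he)) (fun he => hj''j' (hE₂inj he)))
            (plb₁ j j' hne) htrip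
          omega
        · omega
    · -- (3,2): triple on side 1, pair on side 2
      have h2 : J₂.card = 2 := by omega
      have t₁ := spanm₁ J₁ (by omega) (by omega)
      have t₂ := spanm₂ J₂ (by omega) (by omega)
      rw [h] at t₁; rw [h2] at t₂
      by_cases hJ : 4 ≤ (J₁ ∪ J₂).card
      · omega
      · have hJ₁J : J₁ = J₁ ∪ J₂ :=
          Finset.eq_of_subset_of_card_le Finset.subset_union_left (by omega)
        have hsub21 : J₂ ⊆ J₁ := by rw [hJ₁J]; exact Finset.subset_union_right
        obtain ⟨j, j', hne, hJ₂e⟩ := Finset.card_eq_two.mp h2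
        have hsd : (J₁ \ J₂).card = 1 := by rw [Finset.card_sdiff_of_subset hsub21]; omega
        obtain ⟨j'', hj''⟩ := Finset.card_eq_one.mp hsd
        have hj''m : j'' ∈ J₁ \ J₂ := by rw [hj'']; exact Finset.mem_singleton_self j''
        rw [Finset.mem_sdiff, hJ₂e] at hj''m
        have hj''j : j'' ≠ j := fun hh => hj''m.2 (by simp [hh])
        have hj''j' : j'' ≠ j' := fun hh => hj''m.2 (by simp [hh])
        have hJ₁e : J₁ = {j, j'} ∪ {j''} := by
          rw [← Finset.union_sdiff_of_subset hsub21, hj'', hJ₂e]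
        have hbu₁ : J₁.biUnion E₁ = E₁ j ∪ E₁ j' ∪ E₁ j'' := by
          rw [hJ₁e]
          ext v
          simp
          try tauto
        have hbu₂ : J₂.biUnion E₂ = E₂ j ∪ E₂ j' := by
          rw [hJ₂e]
          simp [Finset.biUnion_insert]
        rw [hbu₁, hbu₂] at hbound
        rw [hbu₂] at t₂
        rw [hbu₁] at t₁
        by_cases htrip : (E₁ j ∪ E₁ j' ∪ E₁ j'').card ≤ 3 * (r - 2) - 3
        · have hpair := pair_big' (hK₂ _ (hE₂ j)) (hK₂ _ (hE₂ j'))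
            (hcA j j' hne (E₁ j'') (hE₁ j'')
              (fun he => hj''j (hE₁inj he)) (fun he => hj''j' (hE₁inj he)))
            (plb₂ j j' hne) htrip
          omega
        · omega
    · have h2 : J₂.card = 1 := by omega
      have t₁ := spanm₁ J₁ (by omega) (by omega)
      have t₂ := span1₂ J₂ h2
      rw [h] at t₁; omega
    · have t₁ := spanm₁ J₁ (by omega) (by omega)
      rw [h] at t₁; omega
  · -- (6r-11, 6)-free
    intro hcfg
    obtain ⟨S, hSsub, hScard, hSspan⟩ := hcfg
    obtain ⟨J₁, J₂, hJcard, hbound⟩ := decomp' K₁ K₂ hdisj E₁ E₂ hE₁ hE₂ hE₁ne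
      x y hxx hyy hxy hx1 hx2 hy1 hy2 S hSsub
    have hle₁ : J₁.card ≤ (J₁ ∪ J₂).card := Finset.card_le_card Finset.subset_union_left
    have hle₂ : J₂.card ≤ (J₁ ∪ J₂).card := Finset.card_le_card Finset.subset_union_right
    have hcases : J₁.card = 0 ∨ J₁.card = 1 ∨ J₁.card = 2 ∨ J₁.card = 3 ∨
        J₁.card = 4 ∨ J₁.card = 5 ∨ J₁.card = 6 := by omega
    rcases hcases with h | h | h | h | h | h | h
    · have h2 : J₂.card = 6 := by omega
      have t₂ := spanm₂ J₂ (by omega) (by omega)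
      rw [h2] at t₂; omega
    · have h2 : J₂.card = 5 := by omega
      have t₁ := span1₁ J₁ h
      have t₂ := spanm₂ J₂ (by omega) (by omega)
      rw [h2] at t₂; omega
    · have h2 : J₂.card = 4 := by omega
      have t₁ := spanm₁ J₁ (by omega) (by omega)
      have t₂ := spanm₂ J₂ (by omega) (by omega)
      rw [h] at t₁; rw [h2] at t₂; omega
    · -- (3,3): the tight case
      have h2 : J₂.card = 3 := by omega
      have t₁ := spanm₁ J₁ (by omega) (by omega)
      have t₂ := spanm₂ J₂ (by omega) (by omega)
      rw [h] at t₁; rw [h2] at t₂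
      by_cases hJ : 4 ≤ (J₁ ∪ J₂).card
      · omega
      · have hJ₁J : J₁ = J₁ ∪ J₂ :=
          Finset.eq_of_subset_of_card_le Finset.subset_union_left (by omega)
        have hJ₂J : J₂ = J₁ ∪ J₂ :=
          Finset.eq_of_subset_of_card_le Finset.subset_union_right (by omega)
        obtain ⟨j₁, j₂, j₃, h12, h13, h23, hJ₁e⟩ := Finset.card_eq_three.mp h
        have hJ₂e : J₂ = {j₁, j₂, j₃} := by rw [hJ₂J, ← hJ₁J, hJ₁e]
        have hbu₁ : J₁.biUnion E₁ = E₁ j₁ ∪ E₁ j₂ ∪ E₁ j₃ := by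
          rw [hJ₁e]
          ext v
          simp
          try tauto
        have hbu₂ : J₂.biUnion E₂ = E₂ j₁ ∪ E₂ j₂ ∪ E₂ j₃ := by
          rw [hJ₂e]
          ext v
          simp
          try tauto
        rw [hbu₁, hbu₂] at hbound
        rw [hbu₁] at t₁
        rw [hbu₂] at t₂
        by_cases htrip₁ : (E₁ j₁ ∪ E₁ j₂ ∪ E₁ j₃).card ≤ 3 * (r - 2) - 3
        · -- all pairs on side 2 are disjoint
          have hre13 : E₁ j₁ ∪ E₁ j₃ ∪ E₁ j₂ = E₁ j₁ ∪ E₁ j₂ ∪ E₁ j₃ := by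
            ext v; simp [Finset.mem_union]; tauto
          have hre23 : E₁ j₂ ∪ E₁ j₃ ∪ E₁ j₁ = E₁ j₁ ∪ E₁ j₂ ∪ E₁ j₃ := by
            ext v; simp [Finset.mem_union]; tauto
          have hp12 := pair_big' (hK₂ _ (hE₂ j₁)) (hK₂ _ (hE₂ j₂))
            (hcA j₁ j₂ h12 (E₁ j₃) (hE₁ j₃)
              (fun he => h13 (hE₁inj he).symm) (fun he => h23 (hE₁inj he).symm))
            (plb₂ j₁ j₂ h12) htrip₁
          have hp13 := pair_big' (hK₂ _ (hE₂ j₁)) (hK₂ _ (hE₂ j₃))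
            (hcA j₁ j₃ h13 (E₁ j₂) (hE₁ j₂)
              (fun he => h12 (hE₁inj he).symm) (fun he => h23 (hE₁inj he)))
            (plb₂ j₁ j₃ h13) (by rw [hre13]; exact htrip₁)
          have hp23 := pair_big' (hK₂ _ (hE₂ j₂)) (hK₂ _ (hE₂ j₃))
            (hcA j₂ j₃ h23 (E₁ j₁) (hE₁ j₁)
              (fun he => h12 (hE₁inj he)) (fun he => h13 (hE₁inj he)))
            (plb₂ j₂ j₃ h23) (by rw [hre23]; exact htrip₁)
          have d12 := disj_of_card' (hK₂ _ (hE₂ j₁)) (hK₂ _ (hE₂ j₂)) hp12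
          have d13 := disj_of_card' (hK₂ _ (hE₂ j₁)) (hK₂ _ (hE₂ j₃)) hp13
          have d23 := disj_of_card' (hK₂ _ (hE₂ j₂)) (hK₂ _ (hE₂ j₃)) hp23
          have hu := card_union3' d12 d13 d23
          rw [hK₂ _ (hE₂ j₁), hK₂ _ (hE₂ j₂), hK₂ _ (hE₂ j₃)] at hu
          omega
        · by_cases htrip₂ : (E₂ j₁ ∪ E₂ j₂ ∪ E₂ j₃).card ≤ 3 * (r - 2) - 3
          · have hre13 : E₂ j₁ ∪ E₂ j₃ ∪ E₂ j₂ = E₂ j₁ ∪ E₂ j₂ ∪ E₂ j₃ := by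
              ext v; simp [Finset.mem_union]; tauto
            have hre23 : E₂ j₂ ∪ E₂ j₃ ∪ E₂ j₁ = E₂ j₁ ∪ E₂ j₂ ∪ E₂ j₃ := by
              ext v; simp [Finset.mem_union]; tauto
            have hp12 := pair_big' (hK₁ _ (hE₁ j₁)) (hK₁ _ (hE₁ j₂))
              (hcB j₁ j₂ h12 (E₂ j₃) (hE₂ j₃)
                (fun he => h13 (hE₂inj he).symm) (fun he => h23 (hE₂inj he).symm))
              (plb₁ j₁ j₂ h12) htrip₂
            have hp13 := pair_big' (hK₁ _ (hE₁ j₁)) (hK₁ _ (hE₁ j₃))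
              (hcB j₁ j₃ h13 (E₂ j₂) (hE₂ j₂)
                (fun he => h12 (hE₂inj he).symm) (fun he => h23 (hE₂inj he)))
              (plb₁ j₁ j₃ h13) (by rw [hre13]; exact htrip₂)
            have hp23 := pair_big' (hK₁ _ (hE₁ j₂)) (hK₁ _ (hE₁ j₃))
              (hcB j₂ j₃ h23 (E₂ j₁) (hE₂ j₁)
                (fun he => h12 (hE₂inj he)) (fun he => h13 (hE₂inj he)))
              (plb₁ j₂ j₃ h23) (by rw [hre23]; exact htrip₂)
            have d12 := disj_of_card' (hK₁ _ (hE₁ j₁)) (hK₁ _ (hE₁ j₂)) hp12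
            have d13 := disj_of_card' (hK₁ _ (hE₁ j₁)) (hK₁ _ (hE₁ j₃)) hp13
            have d23 := disj_of_card' (hK₁ _ (hE₁ j₂)) (hK₁ _ (hE₁ j₃)) hp23
            have hu := card_union3' d12 d13 d23
            rw [hK₁ _ (hE₁ j₁), hK₁ _ (hE₁ j₂), hK₁ _ (hE₁ j₃)] at hu
            omega
          · omega
    · have h2 : J₂.card = 2 := by omega
      have t₁ := spanm₁ J₁ (by omega) (by omega)
      have t₂ := spanm₂ J₂ (by omega) (by omega)
      rw [h] at t₁; rw [h2] at t₂; omega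
    · have h2 : J₂.card = 1 := by omega
      have t₁ := spanm₁ J₁ (by omega) (by omega)
      have t₂ := span1₂ J₂ h2
      rw [h] at t₁; omega
    · have t₁ := spanm₁ J₁ (by omega) (by omega)
      rw [h] at t₁; omega
end
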